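/- Let f be an entire function in class 𝒜 and let c be a real number. Then the entire function z ↦ f(z + c) is also in class 𝒜. (In particular, if z ∈ ℂ with |z| > 2|c| and c ∈ ℝ, then |Im(1/(z - c))| ≤ 4 |Im(1/z)|.) -/

import Mathlib

open Filter MeasureTheory Metric Topology Complex Classical

noncomputable section

/-- The order of vanishing (zero multiplicity) of `f` at `z`, as a natural number
(junk value `0` if `f` is not analytic at `z` or vanishes identically near `z`). -/
noncomputable def ordZ (f : ℂ → ℂ) (z : ℂ) : ℕ :=
  if h : AnalyticAt ℂ f z then (analyticOrderAt f z).toNat else 0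

/-- Unintegrated counting function `n(r)` attached to a multiplicity function `w`. -/
noncomputable def countOf (w : ℂ → ℕ) (r : ℝ) : ℝ :=
  ∑' z : Metric.closedBall (0 : ℂ) r, (w (z : ℂ) : ℝ)

/-- Integrated Nevanlinna counting function
`N(r) = ∫_1^r (n(t) - n(0))/t dt + n(0) log r` attached to a multiplicity function `w`. -/
noncomputable def NevNOf (w : ℂ → ℕ) (r : ℝ) : ℝ :=
  (∫ t in Set.Ioc (1 : ℝ) r, (countOf w t - countOf w 0) / t) + countOf w 0 * Real.log r

/-- `N(r, 1/f)` : the integrated counting function of the zeros of `f`. -/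
noncomputable def Nzero (f : ℂ → ℂ) (r : ℝ) : ℝ :=
  NevNOf (ordZ f) r

/-- `log⁺`. -/
noncomputable def logPlus (x : ℝ) : ℝ := Real.log (max x 1)

/-- The Nevanlinna proximity function `m(r, f)`. -/
noncomputable def prox (f : ℂ → ℂ) (r : ℝ) : ℝ :=
  (1 / (2 * Real.pi)) *
    ∫ θ in (0 : ℝ)..(2 * Real.pi),
      logPlus (‖f ((r : ℂ) * Complex.exp ((θ : ℂ) * Complex.I))‖)

/-- The Nevanlinna characteristic `T(r, f) = m(r, f)` of an entire function `f`
(an entire function has no poles, so `N(r, f) = 0`). -/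
noncomputable def Tent (f : ℂ → ℂ) (r : ℝ) : ℝ := prox f r

/-- The Nevanlinna characteristic `T(r, g/h) = m(r, g/h) + N(r, g/h)` of the meromorphic
function `g/h`, where `g, h` are entire; the pole order of `g/h` at `z` is
`max (ord_z h - ord_z g, 0)`. -/
noncomputable def Tratio (g h : ℂ → ℂ) (r : ℝ) : ℝ :=
  prox (fun z => g z / h z) r + NevNOf (fun z => ordZ h z - ordZ g z) r

/-- `T(r) = o(r^k)` as `r → ∞` outside a set of finite (Lebesgue) measure. -/
def SmallOutside (k : ℕ) (T : ℝ → ℝ) : Prop :=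
  ∃ E : Set ℝ, volume E < ⊤ ∧
    Tendsto (fun r => T r / r ^ k) (atTop ⊓ 𝓟 Eᶜ) (𝓝 0)

/-- An entire function belonging to the field `ℳ_k`. -/
def EntireInM (k : ℕ) (f : ℂ → ℂ) : Prop :=
  Differentiable ℂ f ∧ SmallOutside k (Tent f)

/-- The meromorphic function `g/h` (with `g, h` entire) belongs to the field `ℳ_k`. -/
def RatioInM (k : ℕ) (g h : ℂ → ℂ) : Prop :=
  SmallOutside k (Tratio g h)

/-- A sequence is an `A`-sequence if `∑ |Im (1/aₙ)| < ∞` (with `Im (1/0) := 0`,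
which is automatic since `(0 : ℂ)⁻¹ = 0` in Lean). -/
def ASeq (zk : ℕ → ℂ) : Prop :=
  Summable fun k => |((zk k)⁻¹).im|

/-- `f` is in class `𝒜`: `f` is a nonzero entire function whose zero sequence
(with multiplicity) is an `A`-sequence. -/
def ClassA (f : ℂ → ℂ) : Prop :=
  Differentiable ℂ f ∧ f ≠ 0 ∧ Summable fun z : ℂ => (ordZ f z : ℝ) * |(z⁻¹).im|

/-- The functions `f 0, …, f (n-1)` are linearly independent over the field `ℳ_2`:
no nontrivial linear combination with coefficients that are meromorphic functions in `ℳ_2`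
(written as ratios `g i / h i` of entire functions) vanishes identically. -/
def LinIndepM2 {n : ℕ} (f : Fin n → ℂ → ℂ) : Prop :=
  ∀ g h : Fin n → ℂ → ℂ,
    (∀ i, Differentiable ℂ (g i)) → (∀ i, Differentiable ℂ (h i)) →
    (∀ i, h i ≠ 0) → (∀ i, RatioInM 2 (g i) (h i)) →
    (∀ z : ℂ, (∀ i, h i z ≠ 0) → ∑ i, (g i z / h i z) * f i z = 0) →
    ∀ i, g i = 0

/-- The Laguerre–Pólya representation
`f(z) = c z^n ∏_k (1 - z/z_k) e^{t z / z_k} · e^{-α z² + β z}`,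
where the (finite or infinite) zero sequence is encoded as `zk : ℕ → ℂ` with the
convention that entries `zk k = 0` are absent (they contribute a factor `1` to the
product, since `z / 0 = 0` in Lean), together with the convergence condition
`∑_k |z_k|^{-t-1} < ∞`. -/
def LPData (f : ℂ → ℂ) (α β c : ℝ) (n t : ℕ) (zk : ℕ → ℂ) : Prop :=
  c ≠ 0 ∧ t ≤ 1 ∧
  (Summable fun k => ((‖zk k‖)⁻¹) ^ (t + 1)) ∧
  ∀ z : ℂ, f z = (c : ℂ) * z ^ n *
      (∏' k : ℕ, ((1 - z / zk k) * Complex.exp ((t : ℂ) * z / zk k))) *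
      Complex.exp (-(α : ℂ) * z ^ 2 + (β : ℂ) * z)

/-- `f ∈ 𝒜` and `f ∈ LP({zₙ})`, i.e. `f` has a Laguerre–Pólya representation whose zero
sequence is an `A`-sequence. -/
def MemLPA (f : ℂ → ℂ) : Prop :=
  Differentiable ℂ f ∧
    ∃ (α β c : ℝ) (n t : ℕ) (zk : ℕ → ℂ), 0 ≤ α ∧ ASeq zk ∧ LPData f α β c n t zk

/-- `f ∈ LP(A; 2)`: as `MemLPA` with `α > 0`. -/
def MemLPA2 (f : ℂ → ℂ) : Prop :=
  Differentiable ℂ f ∧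
    ∃ (α β c : ℝ) (n t : ℕ) (zk : ℕ → ℂ), 0 < α ∧ ASeq zk ∧ LPData f α β c n t zk

/-- `f ∈ LP_t(A)`: as `MemLPA` with the prescribed value of `t`. -/
def MemLPtA (t : ℕ) (f : ℂ → ℂ) : Prop :=
  Differentiable ℂ f ∧
    ∃ (α β c : ℝ) (n : ℕ) (zk : ℕ → ℂ), 0 ≤ α ∧ ASeq zk ∧ LPData f α β c n t zk

/-- `f ∈ LP_t(A; 2)`: as `MemLPA2` with the prescribed value of `t`. -/
def MemLPtA2 (t : ℕ) (f : ℂ → ℂ) : Prop :=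
  Differentiable ℂ f ∧
    ∃ (α β c : ℝ) (n : ℕ) (zk : ℕ → ℂ), 0 < α ∧ ASeq zk ∧ LPData f α β c n t zk

/-- `f` is in the `A`-type I class: `t = 0`, `α = 0`, `β ≥ 0` and the zero sequence is an
`A`-sequence. -/
def ATypeI (f : ℂ → ℂ) : Prop :=
  Differentiable ℂ f ∧
    ∃ (β c : ℝ) (n : ℕ) (zk : ℕ → ℂ), 0 ≤ β ∧ ASeq zk ∧ LPData f 0 β c n 0 zk

/-- `f ∈ LP(ℝ)`: Laguerre–Pólya representation with real zero sequence. -/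
def MemLPReal (f : ℂ → ℂ) : Prop :=
  Differentiable ℂ f ∧
    ∃ (α β c : ℝ) (n t : ℕ) (zk : ℕ → ℂ), 0 ≤ α ∧ (∀ k, (zk k).im = 0) ∧
      LPData f α β c n t zk

/-- `f ∈ LP(ℝ; 2)`: as `MemLPReal` with `α > 0`. -/
def MemLPReal2 (f : ℂ → ℂ) : Prop :=
  Differentiable ℂ f ∧
    ∃ (α β c : ℝ) (n t : ℕ) (zk : ℕ → ℂ), 0 < α ∧ (∀ k, (zk k).im = 0) ∧
      LPData f α β c n t zk

/-- The order `ρ(f) = limsup_{r→∞} log T(r,f) / log r` of an entire function `f`,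
as an extended real number. -/
noncomputable def rho (f : ℂ → ℂ) : EReal :=
  Filter.limsup (fun r : ℝ => ((Real.log (Tent f r) / Real.log r : ℝ) : EReal)) Filter.atTop

end

/-
Translating by `c` moves each zero `z` of `f` to `z - c` with the same multiplicity. As `c` is
real, `Im (z - c) = Im z`, and `|z - c| ≥ |z| / 2` once `|z| > 2|c|`, so
`|Im (1/(z - c))| = |Im z| / |z - c|² ≤ 4 |Im z| / |z|² = 4 |Im (1/z)|`. Hence the new series is
dominated by four times the old one outside the finitely many zeros in `|z| ≤ 2|c|`.
-/

lemma ordZ_eq_toNat_analyticOrderAt (f : ℂ → ℂ) (z : ℂ) :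
    ordZ f z = (analyticOrderAt f z).toNat := by
  by_cases hf : AnalyticAt ℂ f z
  · rw [ordZ, dif_pos hf]
  · rw [ordZ, dif_neg hf, analyticOrderAt_of_not_analyticAt hf, ENat.toNat_zero]

lemma ordZ_comp_add_const (f : ℂ → ℂ) (c z : ℂ) :
    ordZ (fun w => f (w + c)) z = ordZ f (z + c) := by
  have hshift : deriv (· + c) z ≠ 0 := by simp
  simp only [ordZ_eq_toNat_analyticOrderAt]
  exact congrArg ENat.toNat
    (analyticOrderAt_comp_of_deriv_ne_zero (f := f) (by fun_prop) hshift)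

lemma apply_eq_zero_of_ordZ_ne_zero {f : ℂ → ℂ} {z : ℂ} (h : ordZ f z ≠ 0) : f z = 0 :=
  apply_eq_zero_of_analyticOrderAt_ne_zero fun h0 =>
    h (by simp [ordZ_eq_toNat_analyticOrderAt, h0])

lemma finite_closedBall_inter_zeros {f : ℂ → ℂ} (hf : Differentiable ℂ f) (hne : f ≠ 0)
    (R : ℝ) : (closedBall (0 : ℂ) R ∩ f ⁻¹' {0}).Finite := by
  obtain ⟨x, hx⟩ := Function.ne_iff.mp hne
  have hcodiscrete : f ⁻¹' {0}ᶜ ∈ codiscreteWithin (closedBall (0 : ℂ) R) :=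
    codiscreteWithin_mono (Set.subset_univ _)
      ((analyticOnNhd_univ_iff_differentiable.mpr hf).preimage_zero_mem_codiscrete hx)
  simpa [Set.sdiff_eq] using (isCompact_closedBall 0 R).finite_sdiff_of_mem_codiscreteWithin hcodiscrete

lemma abs_im_inv (w : ℂ) : |(w⁻¹).im| = |w.im| / ‖w‖ ^ 2 := by
  rw [inv_im, ← Complex.sq_norm, abs_div, abs_neg, abs_of_nonneg (sq_nonneg ‖w‖)]

lemma abs_im_inv_sub_ofReal_le {c : ℝ} {z : ℂ} (hz : 2 * |c| < ‖z‖) :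
    |((z - c)⁻¹).im| ≤ 4 * |(z⁻¹).im| := by
  have hz0 : 0 < ‖z‖ := lt_of_le_of_lt (by positivity) hz
  have hzc : ‖z‖ / 2 ≤ ‖z - c‖ := by
    have := norm_sub_norm_le z c
    rw [norm_real, Real.norm_eq_abs] at this
    linarith
  calc |((z - c)⁻¹).im| = |z.im| / ‖z - c‖ ^ 2 := by
        rw [abs_im_inv, sub_im, ofReal_im, sub_zero]
    _ ≤ |z.im| / (‖z‖ / 2) ^ 2 := by gcongr
    _ = 4 * |(z⁻¹).im| := by
        rw [abs_im_inv]
        ring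

lemma ClassA.summable_ordZ_mul_abs_im_inv_sub_ofReal {f : ℂ → ℂ} (hf : ClassA f) (c : ℝ) :
    Summable fun w : ℂ => (ordZ f w : ℝ) * |((w - c)⁻¹).im| := by
  obtain ⟨hdiff, hne, hsum⟩ := hf
  refine (hsum.mul_left 4).of_norm_bounded_eventually (Filter.eventually_cofinite.mpr ?_)
  refine (finite_closedBall_inter_zeros hdiff hne (2 * |c|)).subset fun w hw => ?_
  have hord : ordZ f w ≠ 0 := fun h0 => hw (by simp [h0])
  refine ⟨mem_closedBall_zero_iff.mpr (not_lt.mp fun hlt => hw ?_),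
    apply_eq_zero_of_ordZ_ne_zero hord⟩
  rw [Real.norm_eq_abs, abs_of_nonneg (by positivity), mul_left_comm]
  exact mul_le_mul_of_nonneg_left (abs_im_inv_sub_ofReal_le hlt) (Nat.cast_nonneg _)

lemma ClassA.comp_add_ofReal {f : ℂ → ℂ} (hf : ClassA f) (c : ℝ) :
    ClassA fun z => f (z + c) := by
  refine ⟨hf.1.comp (differentiable_id.add_const _), fun h0 => hf.2.1 ?_, ?_⟩
  · funext w
    simpa using congrFun h0 (w - c)
  · simp only [ordZ_comp_add_const]
    refine ((Equiv.addRight (c : ℂ)).summable_iff.mpr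
      (hf.summable_ordZ_mul_abs_im_inv_sub_ofReal c)).congr fun z => ?_
    simp

/-- from the proof of Corollary 1.5(1).
If `f` is in class `𝒜` and `c` is real, then `z ↦ f(z + c)` is also in class `𝒜`.
In particular, if `|z| > 2|c|` then `|Im(1/(z - c))| ≤ 4 |Im(1/z)|`. -/
theorem stmt13 (f : ℂ → ℂ) (hf : ClassA f) (c : ℝ) :
    ClassA (fun z => f (z + (c : ℂ))) ∧
      ∀ z : ℂ, 2 * |c| < ‖z‖ →
        |((z - (c : ℂ))⁻¹).im| ≤ 4 * |(z⁻¹).im| :=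
  ⟨hf.comp_add_ofReal c, fun _ hz => abs_im_inv_sub_ofReal_le hz⟩
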